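/- arXiv:1308.4617 — 8 statements merged into one kernel-verified Lean document; each statement's English description precedes it below -/
import Mathlib

section
/- Let F be a field, A an m×m matrix and B an n×n matrix over F, and consider the linear operator on M_{m,n}(F) given by C ↦ ACB. If all eigenvalues of A and B lie in F, then all eigenvalues of this operator lie in F, and every such eigenvalue has the form αβ where α is an eigenvalue of A and β is an eigenvalue of B. -/
open Polynomial

/-- The linear operator `C ↦ A C B` on the space of `m × n` matrices. -/
def lrMul {F : Type*} [Field F] {m n : ℕ}
    (A : Matrix (Fin m) (Fin m) F) (B : Matrix (Fin n) (Fin n) F) :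
    Matrix (Fin m) (Fin n) F →ₗ[F] Matrix (Fin m) (Fin n) F where
  toFun C := A * C * B
  map_add' C D := by simp [Matrix.mul_add, Matrix.add_mul]
  map_smul' c C := by simp [Matrix.mul_smul, Matrix.smul_mul]

/-!
Over an algebraically closed field, `C ↦ A C B` is the product of the commuting operators
`C ↦ A C` and `C ↦ C B`, whose spectra lie in those of `A` and `B` (if `c - A` is invertible,
so is `C ↦ (c - A) C`). Two commuting operators restrict to the eigenspace of their product
for `γ`, where they have a common eigenvector, so `γ = α β` with `α`, `β` eigenvalues of the
factors. Over the algebraic closure of `F` the eigenvalues of `A` and `B` are already in `F`,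
hence so are all roots of the characteristic polynomial of `C ↦ A C B`, which therefore splits
over `F`.
-/

namespace Module.End

variable {K V : Type*} [Field K] [AddCommGroup V] [Module K V]

theorem HasEigenvector.of_restrict {f : End K V} {p : Submodule K V} (hfp : ∀ x ∈ p, f x ∈ p)
    {μ : K} {x : p} (hx : HasEigenvector (f.restrict hfp) μ x) : f.HasEigenvector μ x :=
  ⟨mem_eigenspace_iff.mpr (congrArg Subtype.val hx.apply_eq_smul),
    by simpa using hx.2⟩

variable [IsAlgClosed K] [FiniteDimensional K V]

theorem exists_hasEigenvector_of_commute [Nontrivial V] {f g : End K V} (hfg : Commute f g) :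
    ∃ x α β, f.HasEigenvector α x ∧ g.HasEigenvector β x := by
  obtain ⟨α, hα⟩ := f.exists_eigenvalue
  have hgE : ∀ x ∈ f.eigenspace α, g x ∈ f.eigenspace α := mapsTo_genEigenspace_of_comm hfg α 1
  have : Nontrivial (f.eigenspace α) := Submodule.nontrivial_iff_ne_bot.mpr hα
  obtain ⟨β, hβ⟩ := exists_eigenvalue (g.restrict hgE)
  obtain ⟨x, hx⟩ := hβ.exists_hasEigenvector
  exact ⟨x, α, β, ⟨x.2, by simpa using hx.2⟩, hx.of_restrict hgE⟩

theorem HasEigenvalue.exists_eq_mul_of_commute {f g : End K V} (hfg : Commute f g) {γ : K}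
    (hγ : (f * g).HasEigenvalue γ) :
    ∃ α β, f.HasEigenvalue α ∧ g.HasEigenvalue β ∧ γ = α * β := by
  set E := (f * g).eigenspace γ
  have hfE : ∀ x ∈ E, f x ∈ E :=
    mapsTo_genEigenspace_of_comm ((Commute.refl f).mul_right hfg).symm γ 1
  have hgE : ∀ x ∈ E, g x ∈ E :=
    mapsTo_genEigenspace_of_comm (hfg.symm.mul_right (Commute.refl g)).symm γ 1
  have : Nontrivial E := Submodule.nontrivial_iff_ne_bot.mpr hγ
  have hfgE : Commute (f.restrict hfE) (g.restrict hgE) := by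
    ext x
    exact LinearMap.congr_fun hfg.eq x
  obtain ⟨x, α, β, hα, hβ⟩ := exists_hasEigenvector_of_commute hfgE
  have hα := hα.of_restrict hfE
  have hβ := hβ.of_restrict hgE
  refine ⟨α, β, hasEigenvalue_of_hasEigenvector hα, hasEigenvalue_of_hasEigenvector hβ, ?_⟩
  refine smul_left_injective K hα.2 ?_
  calc γ • (x : V) = f (g x) := (mem_eigenspace_iff.mp x.2).symm
    _ = (α * β) • (x : V) := by
      rw [hβ.apply_eq_smul, map_smul, hα.apply_eq_smul, smul_smul, mul_comm]

end Module.End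

section lrMul

variable {F : Type*} [Field F] {m n : ℕ}

@[simp]
theorem lrMul_apply (A : Matrix (Fin m) (Fin m) F) (B : Matrix (Fin n) (Fin n) F)
    (C : Matrix (Fin m) (Fin n) F) : lrMul A B C = A * C * B := rfl

theorem lrMul_mul_lrMul (A A' : Matrix (Fin m) (Fin m) F) (B B' : Matrix (Fin n) (Fin n) F) :
    lrMul A B * lrMul A' B' = lrMul (A * A') (B' * B) := by
  ext C : 1
  simp [Matrix.mul_assoc]

theorem lrMul_one_one : (lrMul 1 1 : Module.End F (Matrix (Fin m) (Fin n) F)) = 1 := by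
  ext C : 1
  simp

theorem lrMul_eq_lrMul_one_mul_lrMul_one (A : Matrix (Fin m) (Fin m) F)
    (B : Matrix (Fin n) (Fin n) F) : lrMul A B = lrMul A 1 * lrMul 1 B := by
  rw [lrMul_mul_lrMul, Matrix.mul_one, Matrix.mul_one]

theorem commute_lrMul_one_lrMul_one (A : Matrix (Fin m) (Fin m) F)
    (B : Matrix (Fin n) (Fin n) F) : Commute (lrMul A 1) (lrMul 1 B) := by
  rw [Commute, SemiconjBy, lrMul_mul_lrMul, lrMul_mul_lrMul]
  simp

theorem isUnit_lrMul {A : Matrix (Fin m) (Fin m) F} {B : Matrix (Fin n) (Fin n) F}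
    (hA : IsUnit A) (hB : IsUnit B) : IsUnit (lrMul A B) := by
  obtain ⟨A, rfl⟩ := hA
  obtain ⟨B, rfl⟩ := hB
  refine ⟨⟨lrMul ↑A ↑B, lrMul ↑A⁻¹ ↑B⁻¹, ?_, ?_⟩, rfl⟩ <;> simp [lrMul_mul_lrMul, lrMul_one_one]

theorem algebraMap_sub_lrMul_one (c : F) (A : Matrix (Fin m) (Fin m) F) :
    algebraMap F _ c - (lrMul A 1 : Module.End F (Matrix (Fin m) (Fin n) F)) =
      lrMul (algebraMap F _ c - A) 1 := by
  ext C : 1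
  simp [Matrix.sub_mul, Algebra.algebraMap_eq_smul_one]

theorem algebraMap_sub_one_lrMul (c : F) (B : Matrix (Fin n) (Fin n) F) :
    algebraMap F _ c - (lrMul 1 B : Module.End F (Matrix (Fin m) (Fin n) F)) =
      lrMul 1 (algebraMap F _ c - B) := by
  ext C : 1
  simp [Matrix.mul_sub, Algebra.algebraMap_eq_smul_one]

theorem spectrum_lrMul_one_subset (A : Matrix (Fin m) (Fin m) F) :
    spectrum F (lrMul A 1 : Module.End F (Matrix (Fin m) (Fin n) F)) ⊆ spectrum F A := by
  intro c hc
  rw [spectrum.mem_iff, algebraMap_sub_lrMul_one] at hc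
  exact spectrum.mem_iff.mpr fun h => hc (isUnit_lrMul h isUnit_one)

theorem spectrum_one_lrMul_subset (B : Matrix (Fin n) (Fin n) F) :
    spectrum F (lrMul 1 B : Module.End F (Matrix (Fin m) (Fin n) F)) ⊆ spectrum F B := by
  intro c hc
  rw [spectrum.mem_iff, algebraMap_sub_one_lrMul] at hc
  exact spectrum.mem_iff.mpr fun h => hc (isUnit_lrMul isUnit_one h)

theorem toMatrix_stdBasis_lrMul (A : Matrix (Fin m) (Fin m) F) (B : Matrix (Fin n) (Fin n) F)
    (p q : Fin m × Fin n) :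
    LinearMap.toMatrix (Matrix.stdBasis F _ _) (Matrix.stdBasis F _ _) (lrMul A B) p q =
      A p.1 q.1 * B q.2 p.2 := by
  rw [LinearMap.toMatrix_apply, Matrix.stdBasis_eq_single]
  simp [Matrix.stdBasis, Matrix.mul_apply, Matrix.single_apply, ite_and]

theorem charpoly_lrMul_map {K : Type*} [Field K] (φ : F →+* K) (A : Matrix (Fin m) (Fin m) F)
    (B : Matrix (Fin n) (Fin n) F) :
    (lrMul A B).charpoly.map φ = (lrMul (A.map φ) (B.map φ)).charpoly := by
  rw [← (lrMul A B).charpoly_toMatrix (Matrix.stdBasis F _ _),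
    ← (lrMul (A.map φ) (B.map φ)).charpoly_toMatrix (Matrix.stdBasis K _ _),
    ← Matrix.charpoly_map]
  congr 1
  ext p q
  simp only [Matrix.map_apply, toMatrix_stdBasis_lrMul, map_mul]

theorem exists_eq_mul_of_isRoot_charpoly_lrMul {K : Type*} [Field K] [IsAlgClosed K]
    (A : Matrix (Fin m) (Fin m) K) (B : Matrix (Fin n) (Fin n) K) {γ : K}
    (hγ : (lrMul A B).charpoly.IsRoot γ) :
    ∃ α β, A.charpoly.IsRoot α ∧ B.charpoly.IsRoot β ∧ γ = α * β := by
  rw [← Module.End.hasEigenvalue_iff_isRoot_charpoly, lrMul_eq_lrMul_one_mul_lrMul_one] at hγ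
  obtain ⟨α, β, hα, hβ, rfl⟩ := hγ.exists_eq_mul_of_commute (commute_lrMul_one_lrMul_one A B)
  rw [Module.End.hasEigenvalue_iff_mem_spectrum] at hα hβ
  exact ⟨α, β, Matrix.mem_spectrum_iff_isRoot_charpoly.mp (spectrum_lrMul_one_subset A hα),
    Matrix.mem_spectrum_iff_isRoot_charpoly.mp (spectrum_one_lrMul_subset B hβ), rfl⟩

theorem exists_eq_map_mul_of_mem_roots_map_charpoly_lrMul {K : Type*} [Field K] [IsAlgClosed K]
    (φ : F →+* K) {A : Matrix (Fin m) (Fin m) F} {B : Matrix (Fin n) (Fin n) F}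
    (hA : A.charpoly.Splits) (hB : B.charpoly.Splits) {γ : K}
    (hγ : γ ∈ ((lrMul A B).charpoly.map φ).roots) :
    ∃ α ∈ A.charpoly.roots, ∃ β ∈ B.charpoly.roots, γ = φ α * φ β := by
  rw [charpoly_lrMul_map] at hγ
  obtain ⟨α, β, hα, hβ, rfl⟩ :=
    exists_eq_mul_of_isRoot_charpoly_lrMul _ _ (isRoot_of_mem_roots hγ)
  rw [Matrix.charpoly_map, ← mem_roots (map_ne_zero A.charpoly_monic.ne_zero), hA.roots_map,
    Multiset.mem_map] at hα
  rw [Matrix.charpoly_map, ← mem_roots (map_ne_zero B.charpoly_monic.ne_zero), hB.roots_map,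
    Multiset.mem_map] at hβ
  obtain ⟨α, hα, rfl⟩ := hα
  obtain ⟨β, hβ, rfl⟩ := hβ
  exact ⟨α, hα, β, hβ, rfl⟩

end lrMul

/-- If all eigenvalues of `A` and `B` lie in `F`, then all eigenvalues of the operator
`C ↦ A C B` lie in `F`, and each of them is a product `α * β` of an eigenvalue `α` of `A`
and an eigenvalue `β` of `B`. -/
theorem stmt0 {F : Type*} [Field F] {m n : ℕ}
    (A : Matrix (Fin m) (Fin m) F) (B : Matrix (Fin n) (Fin n) F)
    (hA : A.charpoly.Splits) (hB : B.charpoly.Splits) :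
    (lrMul A B).charpoly.Splits ∧
      ∀ γ ∈ (lrMul A B).charpoly.roots,
        ∃ α ∈ A.charpoly.roots, ∃ β ∈ B.charpoly.roots, γ = α * β := by
  let φ := algebraMap F (AlgebraicClosure F)
  have hsplits : (lrMul A B).charpoly.Splits := by
    refine Splits.of_splits_map φ (IsAlgClosed.splits _) fun γ hγ ↦ ?_
    obtain ⟨α, -, β, -, rfl⟩ := exists_eq_map_mul_of_mem_roots_map_charpoly_lrMul φ hA hB hγ
    exact ⟨α * β, map_mul φ α β⟩
  refine ⟨hsplits, fun γ hγ ↦ ?_⟩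
  have hφγ := hsplits.roots_map φ ▸ Multiset.mem_map_of_mem φ hγ
  obtain ⟨α, hα, β, hβ, h⟩ := exists_eq_map_mul_of_mem_roots_map_charpoly_lrMul φ hA hB hφγ
  exact ⟨α, hα, β, hβ, φ.injective (by rw [h, map_mul])⟩
end

section
/- Let A ∈ M_m(F) and B ∈ M_n(F) with minimal polynomials p_A and p_B. Then 1 is an eigenvalue of the operator C ↦ ACB on M_{m,n}(F) if and only if p_A and the adjoint polynomial p_B* are not relatively prime in F[X]. -/
open Polynomial

/-!
If `A C B = C` then `A^k C B^k = C` for every `k`, and reflecting the sum defining `q*(A)`, with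
`q = p_B` of degree `d`, gives `q*(A) C B^d = C q(B) = 0`. If `p_A` and `q*` are coprime, `q*(A)` is
invertible, so `C B^d = 0` and `C = A^d C B^d = 0`.

Conversely, a common root `λ` of `p_A` and `q*` in an algebraic closure is nonzero because
`q*(0) = 1`, and `λ⁻¹` is a root of `q`. With `A v = λ v` and `wᵀ B = λ⁻¹ wᵀ`, the rank-one matrix
`v wᵀ` is fixed by `C ↦ A C B`. This operator is `Bᵀ ⊗ A` in the coordinates `vec C`, so whether
`1` is one of its eigenvalues does not change under extension of scalars.
-/

open Matrix Module.End
open scoped Kronecker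

namespace Polynomial

variable {R K : Type*} [CommRing R] [Field K] [Algebra R K] {p : R[X]} {a : K}

theorem Monic.ne_zero_of_aeval_reverse_eq_zero (hp : p.Monic) (h : aeval a p.reverse = 0) :
    a ≠ 0 := by
  rintro rfl
  rw [← coeff_zero_eq_aeval_zero', coeff_zero_reverse, hp.leadingCoeff, map_one] at h
  exact one_ne_zero h

theorem aeval_inv_eq_zero_of_aeval_reverse_eq_zero (ha : a ≠ 0) (h : aeval a p.reverse = 0) :
    aeval a⁻¹ p = 0 := by
  have : Invertible a⁻¹ := invertibleOfNonzero (inv_ne_zero ha)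
  rwa [aeval_def, ← eval₂_reverse_eq_zero_iff, invOf_eq_inv, inv_inv]

end Polynomial

namespace Matrix

section FixedByMulMul

variable {R l m : Type*} [CommRing R] [Fintype l] [Fintype m] [DecidableEq l] [DecidableEq m]
  {A : Matrix l l R} {B : Matrix m m R} {C : Matrix l m R}

theorem pow_mul_mul_pow_of_mul_mul_eq (h : A * C * B = C) (k : ℕ) : A ^ k * C * B ^ k = C := by
  induction k with
  | zero => simp
  | succ k ih =>
    calc A ^ (k + 1) * C * B ^ (k + 1) = A * (A ^ k * C * B ^ k) * B := by
          rw [pow_succ', pow_succ]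
          simp only [Matrix.mul_assoc]
      _ = C := by rw [ih, h]

theorem aeval_reverse_mul_mul_pow_natDegree (h : A * C * B = C) (q : R[X]) :
    aeval A q.reverse * C * B ^ q.natDegree = C * aeval B q := by
  set N := q.natDegree
  rw [aeval_eq_sum_range' (q.reverse_natDegree_le.trans_lt N.lt_succ_self), aeval_eq_sum_range,
    Matrix.sum_mul, Matrix.sum_mul, Matrix.mul_sum, ← Finset.sum_range_reflect]
  refine Finset.sum_congr rfl fun i hi => ?_
  have hi : i ≤ N := Nat.lt_succ_iff.mp (Finset.mem_range.mp hi)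
  rw [Nat.succ_sub_one, coeff_reverse, revAt_le (Nat.sub_le N i), Nat.sub_sub_self hi,
    Matrix.smul_mul, Matrix.smul_mul, Matrix.mul_smul]
  congr 1
  calc A ^ (N - i) * C * B ^ N = (A ^ (N - i) * C * B ^ (N - i)) * B ^ i := by
        rw [Matrix.mul_assoc _ (B ^ (N - i)), ← pow_add, Nat.sub_add_cancel hi]
    _ = C * B ^ i := by rw [pow_mul_mul_pow_of_mul_mul_eq h]

theorem eq_zero_of_mul_mul_eq_of_isCoprime {p q : R[X]} (h : A * C * B = C)
    (hp : aeval A p = 0) (hq : aeval B q = 0) (hpq : IsCoprime p q.reverse) : C = 0 := by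
  obtain ⟨u, v, huv⟩ := hpq
  have hv : aeval A v * aeval A q.reverse = 1 := by
    simpa [hp] using congrArg (aeval A) huv
  have hCB : C * B ^ q.natDegree = 0 := by
    rw [← Matrix.one_mul (C * _), ← hv, Matrix.mul_assoc, ← Matrix.mul_assoc (aeval A q.reverse),
      aeval_reverse_mul_mul_pow_natDegree h, hq, Matrix.mul_zero, Matrix.mul_zero]
  rw [← pow_mul_mul_pow_of_mul_mul_eq h q.natDegree, Matrix.mul_assoc, hCB, Matrix.mul_zero]

end FixedByMulMul

theorem hasEigenvalue_toLin'_map_iff {K L ι : Type*} [Field K] [Field L] [Fintype ι]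
    [DecidableEq ι] (φ : K →+* L) (M : Matrix ι ι K) (μ : K) :
    HasEigenvalue (toLin' (M.map φ)) (φ μ) ↔ HasEigenvalue (toLin' M) μ := by
  rw [hasEigenvalue_iff_isRoot_charpoly, hasEigenvalue_iff_isRoot_charpoly, charpoly_toLin',
    charpoly_toLin', charpoly_map, IsRoot.def, IsRoot.def, eval_map, eval₂_hom,
    map_eq_zero_iff φ φ.injective]

theorem isRoot_charpoly_map_of_aeval_minpoly {F K ι : Type*} [Field F] [Field K] [Algebra F K]
    [Fintype ι] [DecidableEq ι] (A : Matrix ι ι F) {a : K} (h : aeval a (minpoly F A) = 0) :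
    (A.map (algebraMap F K)).charpoly.IsRoot a := by
  obtain ⟨c, hc⟩ := minpoly_dvd_charpoly A
  rw [charpoly_map, IsRoot.def, eval_map_algebraMap, hc, map_mul, h, zero_mul]

end Matrix

theorem Module.End.hasEigenvalue_iff_exists_apply_eq_smul {R M : Type*} [CommRing R]
    [AddCommGroup M] [Module R M] {f : End R M} {μ : R} :
    HasEigenvalue f μ ↔ ∃ x ≠ 0, f x = μ • x := by
  simp only [hasEigenvalue_iff, Submodule.ne_bot_iff, mem_eigenspace_iff, and_comm]

section lrMul

variable {K : Type*} [Field K] {m n : ℕ} (A : Matrix (Fin m) (Fin m) K)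
  (B : Matrix (Fin n) (Fin n) K)

theorem hasEigenvalue_lrMul_iff_exists {μ : K} :
    HasEigenvalue (lrMul A B) μ ↔ ∃ C : Matrix (Fin m) (Fin n) K, C ≠ 0 ∧ A * C * B = μ • C :=
  hasEigenvalue_iff_exists_apply_eq_smul

theorem hasEigenvalue_lrMul_iff_kronecker {μ : K} :
    HasEigenvalue (lrMul A B) μ ↔ HasEigenvalue (toLin' (Bᵀ ⊗ₖ A)) μ := by
  rw [hasEigenvalue_lrMul_iff_exists, hasEigenvalue_iff_exists_apply_eq_smul,
    vec_bijective.surjective.exists]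
  simp only [toLin'_apply, kronecker_mulVec_vec, transpose_transpose, ← vec_smul, vec_inj, ne_eq,
    vec_eq_zero_iff]

theorem hasEigenvalue_lrMul_map_iff {L : Type*} [Field L] (φ : K →+* L) (μ : K) :
    HasEigenvalue (lrMul (A.map φ) (B.map φ)) (φ μ) ↔ HasEigenvalue (lrMul A B) μ := by
  have hmap : (B.map φ)ᵀ ⊗ₖ A.map φ = (Bᵀ ⊗ₖ A).map φ := by
    ext
    simp [kroneckerMap_apply]
  rw [hasEigenvalue_lrMul_iff_kronecker, hasEigenvalue_lrMul_iff_kronecker, hmap,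
    hasEigenvalue_toLin'_map_iff]

theorem hasEigenvalue_lrMul_mul_of_isRoot_charpoly {a b : K} (ha : A.charpoly.IsRoot a)
    (hb : B.charpoly.IsRoot b) : HasEigenvalue (lrMul A B) (a * b) := by
  rw [← charpoly_toLin', ← hasEigenvalue_iff_isRoot_charpoly] at ha
  rw [← charpoly_transpose, ← charpoly_toLin', ← hasEigenvalue_iff_isRoot_charpoly] at hb
  obtain ⟨v, hv0, hv⟩ := hasEigenvalue_iff_exists_apply_eq_smul.1 ha
  obtain ⟨w, hw0, hw⟩ := hasEigenvalue_iff_exists_apply_eq_smul.1 hb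
  rw [toLin'_apply] at hv
  rw [toLin'_apply, mulVec_transpose] at hw
  have hvw : vecMulVec v w ≠ 0 := by
    obtain ⟨i, hi⟩ := Function.ne_iff.mp hv0
    obtain ⟨j, hj⟩ := Function.ne_iff.mp hw0
    exact fun h => mul_ne_zero hi hj congr($h i j)
  refine (hasEigenvalue_lrMul_iff_exists A B).2 ⟨vecMulVec v w, hvw, ?_⟩
  rw [mul_vecMulVec, vecMulVec_mul, hv, hw, smul_vecMulVec, vecMulVec_smul, smul_smul]

end lrMul

/-- `1` is an eigenvalue of the operator `C ↦ A C B` if and only if the minimal polynomial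
of `A` and the adjoint (coefficient-reversed) minimal polynomial of `B` are not coprime. -/
theorem stmt4 {F : Type*} [Field F] {m n : ℕ}
    (A : Matrix (Fin m) (Fin m) F) (B : Matrix (Fin n) (Fin n) F) :
    Module.End.HasEigenvalue (lrMul A B) 1 ↔
      ¬ IsCoprime (minpoly F A) ((minpoly F B).reverse) := by
  constructor
  · rintro hev hcop
    obtain ⟨C, hC0, hC⟩ := (hasEigenvalue_lrMul_iff_exists A B).1 hev
    rw [one_smul] at hC
    exact hC0 <| eq_zero_of_mul_mul_eq_of_isCoprime hC (minpoly.aeval F A) (minpoly.aeval F B) hcop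
  · intro hncop
    obtain ⟨a, hpa, hqa⟩ : ∃ a : AlgebraicClosure F,
        aeval a (minpoly F A) = 0 ∧ aeval a (minpoly F B).reverse = 0 := by
      simpa [isCoprime_iff_aeval_ne_zero_of_isAlgClosed F (AlgebraicClosure F)] using hncop
    have ha : a ≠ 0 := (minpoly.monic (.of_finite F B)).ne_zero_of_aeval_reverse_eq_zero hqa
    rw [← hasEigenvalue_lrMul_map_iff A B (algebraMap F (AlgebraicClosure F)), map_one,
      ← mul_inv_cancel₀ ha]
    exact hasEigenvalue_lrMul_mul_of_isRoot_charpoly _ _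
      (isRoot_charpoly_map_of_aeval_minpoly A hpa)
      (isRoot_charpoly_map_of_aeval_minpoly B (aeval_inv_eq_zero_of_aeval_reverse_eq_zero ha hqa))
end

section
/- Let A ∈ gl(n,F) with minimal polynomial p_A satisfying gcd(p_A, p_A*) = 1, and let T be the 2n×2n block matrix with blocks [[0, A],[I_n, 0]]. Then the Lie algebra L(T) = {X ∈ gl(2n,F) : XᵀT + TX = 0} is isomorphic to the centralizer of A in gl(n,F); explicitly, L(T) consists of the block-diagonal matrices diag(−Yᵀ, Y) with Y ∈ gl(n,F) commuting with A. -/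
/-! Write `X = [[P, Q], [R, S]]`. The condition `Xᵀ T + T X = 0` reads `Rᵀ = -A R`, `P = -Sᵀ`,
`S A = A S` and `Qᵀ A = -Q`, so `R = A R Aᵀ` and `Q = Aᵀ Q A`. If `M X N = X` and `p` has degree
`d`, then `X p*(N) = p(M) X N^d`; so when `p` annihilates both `M` and `N` and is coprime to `p*`,
`X = 0`. Taking `p = p_A`, which also annihilates `Aᵀ`, the off-diagonal blocks vanish, and
`Y ↦ diag(-Yᵀ, Y)` is then a Lie algebra isomorphism from the centralizer of `A` onto `L(T)`. -/

open Polynomial Matrix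

attribute [local instance] LieRing.ofAssociativeRing
attribute [local instance] LieAlgebra.ofAssociativeAlgebra

variable {F : Type*} [Field F]

/-- The Lie algebra `L(S)` of all matrices `X` with `Xᵀ S + S X = 0`. -/
def lieAlgOfForm {k : Type*} [Fintype k] [DecidableEq k] (S : Matrix k k F) :
    LieSubalgebra F (Matrix k k F) where
  carrier := {X | Xᵀ * S + S * X = 0}
  add_mem' := by
    intro X Y hX hY
    simp only [Set.mem_setOf_eq] at *
    rw [transpose_add, add_mul, mul_add, add_add_add_comm, hX, hY, add_zero]
  zero_mem' := by simp
  smul_mem' := by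
    intro c X hX
    simp only [Set.mem_setOf_eq] at *
    rw [transpose_smul, smul_mul_assoc, mul_smul_comm, ← smul_add, hX, smul_zero]
  lie_mem' := by
    intro X Y hX hY
    simp only [Set.mem_setOf_eq] at *
    have hX' : Xᵀ * S = -(S * X) := eq_neg_of_add_eq_zero_left hX
    have hY' : Yᵀ * S = -(S * Y) := eq_neg_of_add_eq_zero_left hY
    show ⁅X, Y⁆ᵀ * S + S * ⁅X, Y⁆ = 0
    rw [Ring.lie_def]
    calc (X * Y - Y * X)ᵀ * S + S * (X * Y - Y * X)
        = Yᵀ * (Xᵀ * S) - Xᵀ * (Yᵀ * S) + S * (X * Y - Y * X) := by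
          rw [transpose_sub, transpose_mul, transpose_mul]; noncomm_ring
      _ = Yᵀ * (-(S * X)) - Xᵀ * (-(S * Y)) + S * (X * Y - Y * X) := by rw [hX', hY']
      _ = -((Yᵀ * S) * X) + (Xᵀ * S) * Y + S * (X * Y - Y * X) := by noncomm_ring
      _ = -((-(S * Y)) * X) + (-(S * X)) * Y + S * (X * Y - Y * X) := by rw [hX', hY']
      _ = 0 := by noncomm_ring

/-- The centralizer of a matrix `A` in `gl(n, F)`, as a Lie subalgebra. -/
def matCentralizer {k : Type*} [Fintype k] [DecidableEq k] (A : Matrix k k F) :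
    LieSubalgebra F (Matrix k k F) where
  carrier := {Y | Y * A = A * Y}
  add_mem' := by
    intro X Y hX hY
    simp only [Set.mem_setOf_eq] at *
    rw [add_mul, mul_add, hX, hY]
  zero_mem' := by simp
  smul_mem' := by
    intro c X hX
    simp only [Set.mem_setOf_eq] at *
    rw [smul_mul_assoc, mul_smul_comm, hX]
  lie_mem' := by
    intro X Y hX hY
    simp only [Set.mem_setOf_eq] at *
    show ⁅X, Y⁆ * A = A * ⁅X, Y⁆
    rw [Ring.lie_def]
    calc (X * Y - Y * X) * A = X * (Y * A) - Y * (X * A) := by noncomm_ring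
      _ = X * (A * Y) - Y * (A * X) := by rw [hY, hX]
      _ = (X * A) * Y - (Y * A) * X := by noncomm_ring
      _ = (A * X) * Y - (A * Y) * X := by rw [hX, hY]
      _ = A * (X * Y - Y * X) := by noncomm_ring

section ReversePolynomial

variable {K R : Type*} [CommRing K] [Ring R] [Algebra K R]

lemma pow_mul_mul_pow_eq_self {M N X : R} (h : M * X * N = X) (i : ℕ) :
    M ^ i * X * N ^ i = X := by
  induction i with
  | zero => simp
  | succ i ih =>
    calc M ^ (i + 1) * X * N ^ (i + 1) = M ^ i * (M * X * N) * N ^ i := by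
          rw [pow_succ, pow_succ']; noncomm_ring
      _ = X := by rw [h, ih]

lemma mul_aeval_reverse_eq {M N X : R} (h : M * X * N = X) (p : K[X]) :
    X * aeval N p.reverse = aeval M p * X * N ^ p.natDegree := by
  set d := p.natDegree
  rw [aeval_eq_sum_range' (Nat.lt_succ_of_le p.reverse_natDegree_le), aeval_eq_sum_range,
    Finset.mul_sum, Finset.sum_mul, Finset.sum_mul,
    ← Finset.sum_range_reflect (fun i => p.coeff i • M ^ i * X * N ^ d) (d + 1)]
  refine Finset.sum_congr rfl fun i hi => ?_
  have hid : i ≤ d := Nat.lt_succ_iff.mp (Finset.mem_range.mp hi)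
  have hXN : X * N ^ i = M ^ (d - i) * X * N ^ d := by
    conv_lhs => rw [← pow_mul_mul_pow_eq_self h (d - i)]
    rw [mul_assoc, ← pow_add, Nat.sub_add_cancel hid]
  rw [coeff_reverse, revAt_le hid, Nat.add_sub_cancel, mul_smul_comm, hXN, smul_mul_assoc,
    smul_mul_assoc]

lemma eq_zero_of_mul_mul_eq_self {M N X : R} (h : M * X * N = X) {p : K[X]}
    (hcop : IsCoprime p p.reverse) (hM : aeval M p = 0) (hN : aeval N p = 0) : X = 0 := by
  obtain ⟨a, b, hab⟩ := hcop
  have hrev : X * aeval N p.reverse = 0 := by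
    rw [mul_aeval_reverse_eq h, hM, zero_mul, zero_mul]
  calc X = X * aeval N (a * p + b * p.reverse) := by rw [hab, map_one, mul_one]
    _ = 0 := by
      rw [map_add, map_mul, hN, mul_zero, zero_add, mul_comm b, map_mul, ← mul_assoc, hrev,
        zero_mul]

end ReversePolynomial

namespace Matrix

variable {m K : Type*} [Fintype m] [CommRing K]

lemma mul_mul_transpose_eq_self {B X : Matrix m m K} (h : Xᵀ + B * X = 0) :
    B * X * Bᵀ = X := by
  have hXt : Xᵀ = -(B * X) := eq_neg_of_add_eq_zero_left h
  calc B * X * Bᵀ = -(-(B * X) * Bᵀ) := by noncomm_ring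
    _ = X := by rw [← hXt, ← transpose_mul, ← transpose_neg, ← hXt, transpose_transpose]

variable [DecidableEq m]

lemma aeval_transpose (A : Matrix m m K) (p : K[X]) : aeval Aᵀ p = (aeval A p)ᵀ := by
  apply MulOpposite.op_injective
  rw [← aeval_op_apply]
  exact aeval_algHom_apply (transposeAlgEquiv m K K) A p

lemma fromBlocks_transpose_mul_add_mul (A P Q R S : Matrix m m K) :
    (fromBlocks P Q R S)ᵀ * fromBlocks 0 A 1 0 + fromBlocks 0 A 1 0 * fromBlocks P Q R S =
      fromBlocks (Rᵀ + A * R) (Pᵀ * A + A * S) (Sᵀ + P) (Qᵀ * A + Q) := by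
  simp [fromBlocks_transpose, fromBlocks_multiply, fromBlocks_add]

def fromBlocksNegTransposeLieHom : Matrix m m K →ₗ⁅K⁆ Matrix (m ⊕ m) (m ⊕ m) K where
  toFun Y := fromBlocks (-Yᵀ) 0 0 Y
  map_add' Y Z := by simp [fromBlocks_add, add_comm]
  map_smul' c Y := by simp [fromBlocks_smul]
  map_lie' {Y Z} := by
    simp [Ring.lie_def, fromBlocks_multiply, fromBlocks_neg, fromBlocks_add, sub_eq_add_neg]

lemma fromBlocksNegTransposeLieHom_injective :
    Function.Injective (fromBlocksNegTransposeLieHom : Matrix m m K →ₗ⁅K⁆ _) :=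
  fun _ _ h => (fromBlocks_inj.mp h).2.2.2

end Matrix

section BlockForm

variable {m : Type*} [Fintype m] [DecidableEq m]

lemma mem_lieAlgOfForm_iff {S X : Matrix m m F} : X ∈ lieAlgOfForm S ↔ Xᵀ * S + S * X = 0 :=
  Iff.rfl

theorem mem_lieAlgOfForm_fromBlocks_iff {A : Matrix m m F}
    (hcop : IsCoprime (minpoly F A) (minpoly F A).reverse) (X : Matrix (m ⊕ m) (m ⊕ m) F) :
    X ∈ lieAlgOfForm (fromBlocks 0 A 1 0) ↔
      ∃ Y : Matrix m m F, Y * A = A * Y ∧ X = fromBlocks (-Yᵀ) 0 0 Y := by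
  constructor
  · intro hX
    rw [mem_lieAlgOfForm_iff, ← fromBlocks_toBlocks X, fromBlocks_transpose_mul_add_mul,
      ← fromBlocks_zero, fromBlocks_inj] at hX
    obtain ⟨hR, hPS, hSP, hQ⟩ := hX
    have hR0 : X.toBlocks₂₁ = 0 :=
      eq_zero_of_mul_mul_eq_self (mul_mul_transpose_eq_self hR) hcop (minpoly.aeval F A)
        (by rw [aeval_transpose, minpoly.aeval, transpose_zero])
    have hQ0 : X.toBlocks₁₂ = 0 := by
      have hQ' : X.toBlocks₁₂ᵀ + Aᵀ * X.toBlocks₁₂ = 0 := by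
        simpa only [transpose_add, transpose_mul, transpose_transpose, transpose_zero, add_comm]
          using congrArg transpose hQ
      have hQfix := mul_mul_transpose_eq_self hQ'
      rw [transpose_transpose] at hQfix
      exact eq_zero_of_mul_mul_eq_self hQfix hcop
        (by rw [aeval_transpose, minpoly.aeval, transpose_zero]) (minpoly.aeval F A)
    have hP : X.toBlocks₁₁ = -X.toBlocks₂₂ᵀ := eq_neg_of_add_eq_zero_right hSP
    refine ⟨X.toBlocks₂₂, ?_, ?_⟩
    · rw [hP, transpose_neg, transpose_transpose, neg_mul] at hPS
      exact eq_of_neg_add_eq_zero hPS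
    · conv_lhs => rw [← fromBlocks_toBlocks X, hP, hQ0, hR0]
  · rintro ⟨Y, hY, rfl⟩
    rw [mem_lieAlgOfForm_iff, fromBlocks_transpose_mul_add_mul]
    simp [hY]

lemma range_fromBlocksNegTransposeLieHom_comp_incl {A : Matrix m m F}
    (hcop : IsCoprime (minpoly F A) (minpoly F A).reverse) :
    (fromBlocksNegTransposeLieHom.comp (matCentralizer A).incl).range =
      lieAlgOfForm (fromBlocks 0 A 1 0) := by
  ext X
  rw [LieHom.mem_range, mem_lieAlgOfForm_fromBlocks_iff hcop]
  exact ⟨fun ⟨Y, hY⟩ => ⟨Y, Y.2, hY.symm⟩, fun ⟨Y, hYA, hY⟩ => ⟨⟨Y, hYA⟩, hY.symm⟩⟩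

noncomputable def lieAlgOfFormEquivMatCentralizer {A : Matrix m m F}
    (hcop : IsCoprime (minpoly F A) (minpoly F A).reverse) :
    lieAlgOfForm (fromBlocks 0 A 1 0) ≃ₗ⁅F⁆ matCentralizer A :=
  ((LieHom.equivRangeOfInjective (fromBlocksNegTransposeLieHom.comp (matCentralizer A).incl)
      fun _ _ h => Subtype.ext (fromBlocksNegTransposeLieHom_injective h)).trans
    (LieEquiv.ofEq _ _ (congrArg _ (range_fromBlocksNegTransposeLieHom_comp_incl hcop)))).symm

end BlockForm

/-- If `gcd(p_A, p_A*) = 1` and `T = [[0, A], [I, 0]]`, then `L(T)` is isomorphic to the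
centralizer of `A` in `gl(n, F)`; explicitly, `L(T)` consists of the matrices
`diag(-Yᵀ, Y)` with `Y` commuting with `A`. -/
theorem stmt5 {n : ℕ} (A : Matrix (Fin n) (Fin n) F)
    (hcop : IsCoprime (minpoly F A) ((minpoly F A).reverse)) :
    (∀ X : Matrix (Fin n ⊕ Fin n) (Fin n ⊕ Fin n) F,
        X ∈ lieAlgOfForm (Matrix.fromBlocks 0 A 1 0) ↔
          ∃ Y : Matrix (Fin n) (Fin n) F, Y * A = A * Y ∧
            X = Matrix.fromBlocks (-Yᵀ) 0 0 Y) ∧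
      Nonempty ((lieAlgOfForm (Matrix.fromBlocks 0 A 1 0 :
          Matrix (Fin n ⊕ Fin n) (Fin n ⊕ Fin n) F)) ≃ₗ⁅F⁆ matCentralizer A) :=
  ⟨mem_lieAlgOfForm_fromBlocks_iff hcop, ⟨lieAlgOfFormEquivMatCentralizer hcop⟩⟩
end

section
/- Suppose the Lie algebra L(f) of skew-adjoint endomorphisms of a bilinear form f on a nonzero finite-dimensional vector space V is reductive (every solvable ideal is central) and the radical of f is nonzero. Then f = 0. -/
/-- A Lie algebra is reductive if every solvable ideal is contained in its center. -/
def IsReductiveLie (R L : Type*) [CommRing R] [LieRing L] [LieAlgebra R L] : Prop :=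
  ∀ I : LieIdeal R L, LieAlgebra.IsSolvable I → I ≤ LieAlgebra.center R L

/-!
The skew maps sending `V` into `Rad f` and vanishing on `Rad f` form an abelian, hence solvable,
ideal of `L(f)`, so reductivity makes them central. For `0 ≠ u ∈ Rad f` and `a ∈ V` the rank-one
map `v ↦ f a v • u` lies in this ideal; its commutator with `v ↦ ψ v • u`, for a functional `ψ`
with `ψ u ≠ 0`, is `v ↦ (f a v * ψ u) • u`, which forces `f a = 0`.
-/

namespace LinearMap.BilinForm

variable {R M : Type*} [CommRing R] [AddCommGroup M] [Module R M] (f : LinearMap.BilinForm R M)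

def radical : Submodule R M := LinearMap.ker f ⊓ LinearMap.ker f.flip

variable {f}

theorem mem_radical {u : M} : u ∈ f.radical ↔ (∀ v, f u v = 0) ∧ ∀ v, f v u = 0 := by
  simp [radical, LinearMap.ext_iff]

theorem apply_mem_radical {x : Module.End R M} (hx : x ∈ skewAdjointLieSubalgebra f)
    {r : M} (hr : r ∈ f.radical) : x r ∈ f.radical := by
  rw [mem_radical] at hr ⊢
  have hx' : ∀ v w, f (x v) w = -f v (x w) := fun v w => by
    simpa using (mem_skewAdjointSubmodule x).mp hx v w
  refine ⟨fun v => by rw [hx', hr.1, neg_zero], fun v => ?_⟩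
  rw [← neg_eq_zero, ← hx', hr.2]

theorem smulRight_mem_skewAdjointLieSubalgebra {u : M} (hu : u ∈ f.radical)
    (φ : Module.Dual R M) :
    φ.smulRight u ∈ skewAdjointLieSubalgebra f := by
  rw [mem_radical] at hu
  show _ ∈ f.skewAdjointSubmodule
  exact (mem_skewAdjointSubmodule _).mpr fun v w => by simp [hu.1, hu.2]

variable (f)

def radicalIdeal : LieIdeal R (skewAdjointLieSubalgebra f) where
  carrier := {x | (∀ v, (x : Module.End R M) v ∈ f.radical) ∧
    ∀ r ∈ f.radical, (x : Module.End R M) r = 0}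
  add_mem' := by
    rintro x y ⟨hx, hx'⟩ ⟨hy, hy'⟩
    refine ⟨fun v => ?_, fun r hr => ?_⟩
    · simpa using add_mem (hx v) (hy v)
    · simp [hx' r hr, hy' r hr]
  zero_mem' := by simp
  smul_mem' := by
    rintro c x ⟨hx, hx'⟩
    refine ⟨fun v => ?_, fun r hr => ?_⟩
    · simpa using Submodule.smul_mem _ c (hx v)
    · simp [hx' r hr]
  lie_mem := by
    rintro y x ⟨hx, hx'⟩
    refine ⟨fun v => ?_, fun r hr => ?_⟩
    · simpa [Ring.lie_def] using sub_mem (apply_mem_radical y.2 (hx v)) (hx _)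
    · simp [Ring.lie_def, hx' r hr, hx' _ (apply_mem_radical y.2 hr)]

instance : IsLieAbelian f.radicalIdeal where
  trivial x y := by
    ext v
    simp [Ring.lie_def, x.2.2 _ (y.2.1 v), y.2.2 _ (x.2.1 v)]

theorem eq_zero_of_radicalIdeal_le_center {K V : Type*} [Field K] [AddCommGroup V] [Module K V]
    {f : LinearMap.BilinForm K V} (h : f.radicalIdeal ≤ LieAlgebra.center K _)
    {u : V} (hu : u ∈ f.radical) (hu0 : u ≠ 0) : f = 0 := by
  obtain ⟨ψ, hψ⟩ := Module.Projective.exists_dual_ne_zero K hu0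
  ext a b
  have hx :
      ⟨(f a).smulRight u, smulRight_mem_skewAdjointLieSubalgebra hu _⟩ ∈ f.radicalIdeal :=
    ⟨fun v => Submodule.smul_mem _ _ hu, fun r hr => by simp [(mem_radical.mp hr).2 a]⟩
  have hcomm := (LieModule.mem_maxTrivSubmodule K _ _ _).mp (h hx)
    ⟨ψ.smulRight u, smulRight_mem_skewAdjointLieSubalgebra hu ψ⟩
  have hb : f a b • ψ u • u = 0 := by
    simpa [(mem_radical.mp hu).2 a] using congr(($hcomm : Module.End K V) b)
  simpa [hψ, hu0] using hb

end LinearMap.BilinForm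

theorem stmt7_general {F V : Type*} [Field F] [AddCommGroup V] [Module F V]
    (f : LinearMap.BilinForm F V)
    (hred : IsReductiveLie F (skewAdjointLieSubalgebra f))
    (hrad : ∃ u : V, u ≠ 0 ∧ (∀ v : V, f u v = 0) ∧ (∀ v : V, f v u = 0)) :
    f = 0 := by
  obtain ⟨u, hu0, hu⟩ := hrad
  exact f.eq_zero_of_radicalIdeal_le_center (hred _ inferInstance)
    (LinearMap.BilinForm.mem_radical.mpr hu) hu0

/-- If `L(f)` is reductive and the radical of `f` is nonzero, then `f = 0`. -/
theorem stmt7 {F V : Type*} [Field F] [AddCommGroup V] [Module F V]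
    [FiniteDimensional F V] [Nontrivial V] (f : LinearMap.BilinForm F V)
    (hred : IsReductiveLie F (skewAdjointLieSubalgebra f))
    (hrad : ∃ u : V, u ≠ 0 ∧ (∀ v : V, f u v = 0) ∧ (∀ v : V, f v u = 0)) :
    f = 0 :=
  stmt7_general f hred hrad
end

section
/- Let f be a non-degenerate bilinear form on V with asymmetry σ. Then σ − σ^{-1} belongs to L(f), the Lie algebra of f-skew-adjoint endomorphisms; moreover σ − σ^{-1} lies in the center of L(f). -/
/-!
Applying the asymmetry condition twice gives `f (σ v) (σ w) = f w (σ v) = f v w`, so `σ` is an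
isometry of `f` and `σ⁻¹` is its `f`-adjoint; hence `σ - σ⁻¹` is skew-adjoint. If `x` is
skew-adjoint, moving `x` across `f` and swapping the arguments with `σ` gives
`f v (σ (x w)) = -f w (x v) = f v (x (σ w))`, so `σ` commutes with `x` by nondegeneracy,
and then so does `σ⁻¹`.
-/

namespace LinearMap.BilinForm

variable {R M : Type*} [CommRing R] [AddCommGroup M] [Module R M]
  {f : LinearMap.BilinForm R M} {σ : M ≃ₗ[R] M}

theorem apply_apply_eq_of_asymmetry (hσ : ∀ v w : M, f w v = f v (σ w)) (v w : M) :
    f (σ v) (σ w) = f v w := by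
  rw [← hσ, ← hσ]

theorem isAdjointPair_of_asymmetry (hσ : ∀ v w : M, f w v = f v (σ w)) :
    IsAdjointPair f f σ σ.symm := fun v w ↦ by
  simpa using apply_apply_eq_of_asymmetry hσ v (σ.symm w)

theorem isAdjointPair_symm_of_asymmetry (hσ : ∀ v w : M, f w v = f v (σ w)) :
    IsAdjointPair f f σ.symm σ := fun v w ↦ by
  simpa using (apply_apply_eq_of_asymmetry hσ (σ.symm v) w).symm

theorem isSkewAdjoint_sub_symm_of_asymmetry (hσ : ∀ v w : M, f w v = f v (σ w)) :
    f.IsSkewAdjoint ((σ : Module.End R M) - σ.symm) := by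
  intro v w
  simpa using (isAdjointPair_of_asymmetry hσ).sub (isAdjointPair_symm_of_asymmetry hσ) v w

theorem commute_of_asymmetry_of_isSkewAdjoint (hf : f.SeparatingRight)
    (hσ : ∀ v w : M, f w v = f v (σ w)) {x : Module.End R M} (hx : f.IsSkewAdjoint x) :
    Commute (σ : Module.End R M) x := by
  ext w
  refine sub_eq_zero.mp (hf _ fun v ↦ ?_)
  have hx' : ∀ a b, f (x a) b = -f a (x b) := fun a b ↦ by simpa using hx a b
  rw [map_sub, sub_eq_zero, Module.End.mul_apply, Module.End.mul_apply, LinearEquiv.coe_coe,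
    ← hσ, hx', hσ, hx', neg_neg]

end LinearMap.BilinForm

theorem stmt12_general {F V : Type*} [Field F] [AddCommGroup V] [Module F V]
    (f : LinearMap.BilinForm F V)
    (hf : f.Nondegenerate) (σ : V ≃ₗ[F] V)
    (hσ : ∀ v w : V, f w v = f v (σ w)) :
    ((σ : Module.End F V) - (σ.symm : Module.End F V)) ∈ skewAdjointLieSubalgebra f ∧
      ∀ x : Module.End F V, x ∈ skewAdjointLieSubalgebra f →
        ((σ : Module.End F V) - (σ.symm : Module.End F V)) * x
          = x * ((σ : Module.End F V) - (σ.symm : Module.End F V)) := by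
  refine ⟨(LinearMap.mem_skewAdjointSubmodule _).mpr
    (LinearMap.BilinForm.isSkewAdjoint_sub_symm_of_asymmetry hσ), fun x hx ↦ ?_⟩
  have hσx := LinearMap.BilinForm.commute_of_asymmetry_of_isSkewAdjoint hf.2 hσ
    ((LinearMap.mem_skewAdjointSubmodule x).mp hx)
  have hσ_symm_x : Commute (σ.symm : Module.End F V) x :=
    hσx.units_inv_left (u := LinearMap.GeneralLinearGroup.ofLinearEquiv σ)
  exact (hσx.sub_left hσ_symm_x).eq

/-- If `σ` is the asymmetry of a non-degenerate bilinear form `f`, then `σ − σ⁻¹` is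
`f`-skew-adjoint and lies in the center of `L(f)`. -/
theorem stmt12 {F V : Type*} [Field F] [AddCommGroup V] [Module F V]
    [FiniteDimensional F V] (f : LinearMap.BilinForm F V)
    (hf : f.Nondegenerate) (σ : V ≃ₗ[F] V)
    (hσ : ∀ v w : V, f w v = f v (σ w)) :
    ((σ : Module.End F V) - (σ.symm : Module.End F V)) ∈ skewAdjointLieSubalgebra f ∧
      ∀ x : Module.End F V, x ∈ skewAdjointLieSubalgebra f →
        ((σ : Module.End F V) - (σ.symm : Module.End F V)) * x
          = x * ((σ : Module.End F V) - (σ.symm : Module.End F V)) :=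
  stmt12_general f hf σ hσ
end

section
/- Let f be a non-degenerate bilinear form on V with asymmetry σ and minimal polynomial p_σ of σ. Then σ is similar to σ^{-1}; consequently the adjoint polynomial p_σ* equals ±p_σ, and every monic irreducible factor p of p_σ satisfies either gcd(p, p*) = 1 or p* = ±p. -/
/-!
Every endomorphism `τ` of a finite-dimensional space is self-adjoint for some nondegenerate
bilinear form: by the structure theorem over `F[X]`, `V` is a direct sum of cyclic modules
`F[X] ⧸ (q)`, and on each of them `(a, c) ↦` (coefficient of `X ^ (deg q - 1)` in `a c mod q`)
is such a form. As `f (σ⁻¹ v) w = f v (σ w)`, the map `g` given by `f (g v) w = b v w`, for a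
form `b` adapted to `σ`, conjugates `σ` into `σ⁻¹`. So `σ` and `σ⁻¹` share their minimal
polynomial `P`, hence `P* = X ^ deg P • P(X⁻¹)` annihilates `σ` and `P ∣ P*`. For monic `P`
this forces `P* = c P` with `c² = 1`; the same dichotomy, applied to an irreducible `p`, gives
the last claim.
-/

open Polynomial DirectSum

def HasSeparatingSelfAdjointForm (K R M : Type*) [CommSemiring K] [AddCommMonoid M]
    [Module K M] [SMul R M] : Prop :=
  ∃ b : LinearMap.BilinForm K M, b.SeparatingLeft ∧
    ∀ (r : R) (x y : M), b (r • x) y = b x (r • y)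

theorem DirectSum.hasSeparatingSelfAdjointForm {K R ι : Type*} [CommSemiring K] [Semiring R]
    [Fintype ι] [DecidableEq ι] {M : ι → Type*} [∀ i, AddCommMonoid (M i)]
    [∀ i, Module K (M i)] [∀ i, Module R (M i)]
    (h : ∀ i, HasSeparatingSelfAdjointForm K R (M i)) :
    HasSeparatingSelfAdjointForm K R (⨁ i, M i) := by
  choose b hsep hb using h
  let π i := component K ι M i
  have hB (x y : ⨁ i, M i) :
      (∑ i, (b i).compl₁₂ (π i) (π i)) x y = ∑ i, b i (x i) (y i) := by
    simp [π, ← apply_eq_component]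
  refine ⟨∑ i, (b i).compl₁₂ (π i) (π i), fun x hx => ?_, fun r x y => ?_⟩
  · ext i
    refine hsep i (x i) fun z => ?_
    have := hx (of M i z)
    rwa [hB, Finset.sum_eq_single i (fun c _ hc => by rw [of_eq_of_ne _ _ _ hc, map_zero])
      (by simp), of_eq_same] at this
  · simp only [hB, smul_apply, hb]

theorem Polynomial.hasSeparatingSelfAdjointForm_quotient {F : Type*} [Field F] {g : F[X]}
    (hg : g ≠ 0) : HasSeparatingSelfAdjointForm F F[X] (F[X] ⧸ F[X] ∙ g) := by
  set q := g * C g.leadingCoeff⁻¹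
  have hq : q.Monic := monic_mul_leadingCoeff_inv hg
  have hunit : IsUnit (C g.leadingCoeff⁻¹) :=
    isUnit_C.mpr (inv_ne_zero (leadingCoeff_ne_zero.mpr hg)).isUnit
  rw [← Submodule.span_singleton_smul_eq hunit, smul_eq_mul, mul_comm]
  set n := q.natDegree
  let ℓ : (F[X] ⧸ F[X] ∙ q) →ₗ[F] F := lcoeff F (n - 1) ∘ₗ AdjoinRoot.modByMonicHom hq
  have hℓ (a : F[X]) : ℓ (Ideal.Quotient.mk _ a) = (a %ₘ q).coeff (n - 1) :=
    congrArg (coeff · (n - 1)) (AdjoinRoot.modByMonicHom_mk hq a)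
  refine ⟨(LinearMap.mul F _).compr₂ ℓ, fun x hx => ?_, fun r x y => ?_⟩
  · obtain ⟨a, rfl⟩ := Ideal.Quotient.mk_surjective x
    set r := a %ₘ q
    have hxr : Ideal.Quotient.mk (F[X] ∙ q) a = Ideal.Quotient.mk _ r := by
      rw [Ideal.Quotient.eq, Ideal.mem_span_singleton]
      exact Dvd.intro _ (eq_sub_of_add_eq' (modByMonic_add_div a q))
    by_contra hx0
    have hr0 : r ≠ 0 := fun h => hx0 (by rw [hxr, h, map_zero])
    have hrn : r.natDegree < n := natDegree_lt_natDegree hr0 (degree_modByMonic_lt _ hq)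
    -- `r * X ^ k` is its own remainder, of degree `n - 1` and with the leading coefficient of `r`
    set k := n - 1 - r.natDegree
    have hdeg : (r * X ^ k).degree < q.degree := by
      refine degree_lt_degree ?_
      rw [natDegree_mul_X_pow k hr0]
      omega
    have := hx (Ideal.Quotient.mk _ (X ^ k))
    rw [hxr, LinearMap.compr₂_apply, LinearMap.mul_apply', ← map_mul, hℓ,
      (modByMonic_eq_self_iff hq).mpr hdeg, coeff_mul_X_pow', if_pos (by omega),
      show n - 1 - k = r.natDegree by omega] at this
    exact leadingCoeff_ne_zero.mpr hr0 this
  · simp [smul_mul_assoc, mul_smul_comm]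

section Conjugation

variable {F V : Type*} [Field F] [AddCommGroup V] [Module F V]

theorem Module.End.exists_nondegenerate_isAdjointPair_self [FiniteDimensional F V]
    (τ : Module.End F V) :
    ∃ b : LinearMap.BilinForm F V, b.Nondegenerate ∧ b.IsAdjointPair b τ τ := by
  classical
  obtain ⟨ι, _, p, hp, e, ⟨ψ⟩⟩ := Module.equiv_directSum_of_isTorsion
    (Module.AEval.isTorsion_of_finiteDimensional F V τ)
  obtain ⟨b, hsep, hb⟩ := DirectSum.hasSeparatingSelfAdjointForm fun i =>
    hasSeparatingSelfAdjointForm_quotient (pow_ne_zero (e i) (hp i).ne_zero)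
  let φ : V ≃ₗ[F] _ := (Module.AEval'.of τ).trans (ψ.restrictScalars F)
  have hφ (v : V) : φ (τ v) = (X : F[X]) • φ v := by
    simp [φ, ← Module.AEval'.X_smul_of]
  refine ⟨b.compl₁₂ φ.toLinearMap φ.toLinearMap, .ofSeparatingLeft fun v hv => ?_,
    fun v w => ?_⟩
  · refine φ.map_eq_zero_iff.mp (hsep _ fun y => ?_)
    simpa using hv (φ.symm y)
  · simp [hφ, hb]

theorem LinearMap.BilinForm.Nondegenerate.exists_conj_eq_of_isAdjointPair
    [FiniteDimensional F V] {f : LinearMap.BilinForm F V} (hf : f.Nondegenerate)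
    {ρ τ : Module.End F V} (h : f.IsAdjointPair f ρ τ) :
    ∃ g : V ≃ₗ[F] V, (g : Module.End F V) * τ = ρ * g := by
  obtain ⟨b, hb, hbτ⟩ := τ.exists_nondegenerate_isAdjointPair_self
  let g := (b.toDual hb).trans (f.toDual hf).symm
  have hg (v w : V) : f (g v) w = b v w := by simp [g, toDual_def]
  refine ⟨g, LinearMap.ext fun v => sub_eq_zero.mp (hf.1 _ fun w => ?_)⟩
  rw [map_sub, LinearMap.sub_apply, sub_eq_zero, Module.End.mul_apply, Module.End.mul_apply,
    LinearEquiv.coe_coe, hg, hbτ v w, ← hg, ← h]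

theorem minpoly_eq_of_conj_eq (g : V ≃ₗ[F] V) {x y : Module.End F V}
    (h : (g : Module.End F V) * x = y * g) : minpoly F y = minpoly F x := by
  have : y = g.conjAlgEquiv F x := by
    ext v
    simpa using (LinearMap.congr_fun h (g.symm v)).symm
  rw [this, minpoly.algEquiv_eq]

end Conjugation

section Reverse

variable {R A : Type*} [CommSemiring R] [Semiring A] [Algebra R A]

theorem Polynomial.aeval_reflect_of_mul_eq_one {x y : A} (hxy : x * y = 1) (hyx : y * x = 1)
    {N : ℕ} {p : R[X]} (hp : p.natDegree ≤ N) :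
    aeval x (reflect N p) = x ^ N * aeval y p := by
  refine induction_with_natDegree_le (fun p => aeval x (reflect N p) = x ^ N * aeval y p) N
    (by simp) (fun n r _ hn => ?_) (fun f g _ _ hf hg => ?_) p hp
  · have hpow : x ^ N * y ^ n = x ^ (N - n) := by
      rw [← Nat.sub_add_cancel hn, pow_add, Nat.add_sub_cancel, mul_assoc,
        ← (show Commute x y from hxy.trans hyx.symm).mul_pow, hxy, one_pow, mul_one]
    rw [reflect_C_mul_X_pow, revAt_le hn, map_mul, map_mul, aeval_C, aeval_C, map_pow, map_pow,
      aeval_X, aeval_X, ← mul_assoc, ← Algebra.commutes, mul_assoc, hpow]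
  · rw [reflect_add, map_add, map_add, hf, hg, mul_add]

theorem Polynomial.aeval_reverse_eq_zero_of_mul_eq_one {x y : A} (hxy : x * y = 1)
    (hyx : y * x = 1) {p : R[X]} (hp : aeval y p = 0) : aeval x p.reverse = 0 := by
  rw [reverse, aeval_reflect_of_mul_eq_one hxy hyx le_rfl, hp, mul_zero]

end Reverse

theorem Polynomial.Monic.reverse_eq_or_eq_neg_of_dvd {R : Type*} [CommRing R] [IsDomain R]
    {p : R[X]} (hp : p.Monic) (h : p ∣ p.reverse) : p.reverse = p ∨ p.reverse = -p := by
  obtain ⟨t, ht⟩ := h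
  have ht0 : t ≠ 0 := by
    rintro rfl
    rw [mul_zero, reverse_eq_zero] at ht
    exact hp.ne_zero ht
  have htdeg : t.natDegree = 0 := by
    have := ht ▸ p.reverse_natDegree_le
    rw [Polynomial.natDegree_mul hp.ne_zero ht0] at this
    omega
  obtain ⟨c, rfl⟩ := Polynomial.natDegree_eq_zero.mp htdeg
  have hc : p.coeff 0 = c := by
    simpa [coeff_reverse, hp.coeff_natDegree] using congrArg (coeff · p.natDegree) ht
  have hc2 : c * c = 1 := by
    simpa [coeff_zero_reverse, hp.leadingCoeff, hc, eq_comm] using congrArg (coeff · 0) ht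
  rcases mul_self_eq_one_iff.mp hc2 with rfl | rfl <;> simp [ht]

/-- Let `σ` be the asymmetry of a non-degenerate bilinear form `f` and `p_σ` its minimal
polynomial.  Then `σ` is similar to `σ⁻¹`, the adjoint (reversed) polynomial `p_σ*` equals
`±p_σ`, and every monic irreducible factor `p` of `p_σ` satisfies `gcd(p, p*) = 1` or
`p* = ±p`. -/
theorem stmt13 {F V : Type*} [Field F] [AddCommGroup V] [Module F V]
    [FiniteDimensional F V] (f : LinearMap.BilinForm F V)
    (hf : f.Nondegenerate) (σ : V ≃ₗ[F] V)
    (hσ : ∀ v w : V, f w v = f v (σ w)) :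
    (∃ g : V ≃ₗ[F] V, (g : Module.End F V) * (σ : Module.End F V)
        = (σ.symm : Module.End F V) * (g : Module.End F V)) ∧
      ((minpoly F (σ : Module.End F V)).reverse = minpoly F (σ : Module.End F V) ∨
        (minpoly F (σ : Module.End F V)).reverse = -(minpoly F (σ : Module.End F V))) ∧
      ∀ p : F[X], p.Monic → Irreducible p → p ∣ minpoly F (σ : Module.End F V) →
        IsCoprime p p.reverse ∨ p.reverse = p ∨ p.reverse = -p := by
  have hadj : f.IsAdjointPair f (σ.symm : Module.End F V) σ := fun v w => by
    rw [LinearEquiv.coe_coe, hσ w, σ.apply_symm_apply, hσ v]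
  obtain ⟨g, hg⟩ := hf.exists_conj_eq_of_isAdjointPair hadj
  have hdvd : minpoly F (σ : Module.End F V) ∣ (minpoly F (σ : Module.End F V)).reverse := by
    refine minpoly.dvd F _ (aeval_reverse_eq_zero_of_mul_eq_one (y := σ.symm.toLinearMap)
      (by ext; simp) (by ext; simp) ?_)
    rw [← minpoly_eq_of_conj_eq g hg]
    exact minpoly.aeval F _
  have hmonic := minpoly.monic (Algebra.IsIntegral.isIntegral (R := F) (σ : Module.End F V))
  refine ⟨⟨g, hg⟩, hmonic.reverse_eq_or_eq_neg_of_dvd hdvd, fun p hp hirr _ => ?_⟩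
  by_cases hp' : p ∣ p.reverse
  · exact Or.inr (hp.reverse_eq_or_eq_neg_of_dvd hp')
  · exact Or.inl (hirr.coprime_iff_not_dvd.mpr hp')
end

section
/- Let f be a non-degenerate bilinear form on V with asymmetry σ and minimal polynomial p_σ. Then: (a) the skew-symmetric part f⁻ (given by f⁻(v,w) = f(v,w) − f(w,v)) is non-degenerate if and only if p_σ(1) ≠ 0; (b) the symmetric part f⁺ (f⁺(v,w) = f(v,w) + f(w,v)) is non-degenerate if and only if p_σ(−1) ≠ 0. -/
/-! Since `f w v = f v (σ w)`, the form `μ • f - f.flip` is `(v, w) ↦ -f v ((σ - μ) w)`. As `f` is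
nondegenerate, this is nondegenerate exactly when `σ - μ` is injective, i.e. when `μ` is not an
eigenvalue of `σ`, i.e. not a root of `p_σ`. Take `μ = 1` for `f⁻` and `μ = -1` for `-f⁺`. -/

open Polynomial Module

namespace LinearMap.BilinForm

variable {R M : Type*} [CommRing R] [IsDomain R] [AddCommGroup M] [Module R M]
  [Module.Free R M] [Module.Finite R M]

lemma nondegenerate_neg_iff {B : LinearMap.BilinForm R M} :
    (-B).Nondegenerate ↔ B.Nondegenerate := by
  rw [nondegenerate_iff_ker_eq_bot, nondegenerate_iff_ker_eq_bot, LinearMap.ker_neg]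

lemma nondegenerate_compl₂_iff {f : LinearMap.BilinForm R M} (hf : f.SeparatingRight)
    (g : End R M) : BilinForm.Nondegenerate (f.compl₂ g) ↔ ker g = ⊥ := by
  rw [LinearMap.ker_eq_bot']
  refine ⟨fun h n hn => h.2 n fun m => by simp [hn], fun h => .ofSeparatingRight fun n hn => ?_⟩
  exact h n (hf (g n) hn)

lemma nondegenerate_smul_sub_flip_iff {f : LinearMap.BilinForm R M} (hf : f.SeparatingRight)
    {σ : End R M} (hσ : ∀ v w, f w v = f v (σ w)) (μ : R) :
    (μ • f - f.flip).Nondegenerate ↔ (minpoly R σ).eval μ ≠ 0 := by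
  have : μ • f - f.flip = -f.compl₂ (σ - μ • 1) := by
    ext v w
    rw [sub_apply, smul_apply, flip_apply, hσ]
    simp only [neg_apply, compl₂_apply, smul_apply, LinearMap.sub_apply, LinearMap.smul_apply,
      End.one_apply, map_sub, map_smul]
    abel
  rw [this, nondegenerate_neg_iff, nondegenerate_compl₂_iff hf, ← End.eigenspace_def, ne_eq,
    ← IsRoot.def, ← End.hasEigenvalue_iff_isRoot, End.hasEigenvalue_iff, not_not]

end LinearMap.BilinForm

open LinearMap.BilinForm in
/-- Let `f` be non-degenerate with asymmetry `σ` and let `p_σ` be the minimal polynomial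
of `σ`.  Then the skew-symmetric part `f⁻ = f − f'` is non-degenerate iff `p_σ(1) ≠ 0`,
and the symmetric part `f⁺ = f + f'` is non-degenerate iff `p_σ(−1) ≠ 0`. -/
theorem stmt15 {F V : Type*} [Field F] [AddCommGroup V] [Module F V]
    [FiniteDimensional F V] (f : LinearMap.BilinForm F V)
    (hf : f.Nondegenerate) (σ : V ≃ₗ[F] V)
    (hσ : ∀ v w : V, f w v = f v (σ w)) :
    ((f - f.flip).Nondegenerate ↔ (minpoly F (σ : Module.End F V)).eval 1 ≠ 0) ∧
      ((f + f.flip).Nondegenerate ↔ (minpoly F (σ : Module.End F V)).eval (-1) ≠ 0) := by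
  constructor
  · simpa using nondegenerate_smul_sub_flip_iff hf.2 hσ 1
  · have : (-1 : F) • f - f.flip = -(f + f.flip) := by module
    rw [← nondegenerate_smul_sub_flip_iff hf.2 hσ (-1), this, nondegenerate_neg_iff]
end

section
/- Let F be a field of characteristic not 2 and f a bilinear form on V whose skew-symmetric part f⁻ is non-degenerate. Let σ^{-+} be defined by f⁺(v,w) = f⁻(v, σ^{-+}w). Then L(f) equals the centralizer of σ^{-+} in L(f⁻): L(f) = {x ∈ L(f⁻) : xσ^{-+} = σ^{-+}x}. -/
/-!
Since `2` is invertible, `f = ½ (f⁺ + f⁻)`, so `x` is skew-adjoint for `f` exactly when it is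
skew-adjoint for both `f⁺` and `f⁻`. For `x` skew-adjoint for `f⁻`, and `f⁺ = f⁻(·, σ ·)`,
skew-adjointness for `f⁺` reads `f⁻(v, xσw) = f⁻(v, σxw)` for all `v, w`, which by
non-degeneracy of `f⁻` says `xσ = σx`.
-/

namespace LinearMap

theorem SeparatingRight.forall_apply_eq_iff {R M₁ M₂ N : Type*} [CommRing R]
    [AddCommGroup M₁] [Module R M₁] [AddCommGroup M₂] [Module R M₂]
    [AddCommGroup N] [Module R N] {B : M₁ →ₗ[R] M₂ →ₗ[R] N} (hB : B.SeparatingRight)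
    {a b : M₂} : (∀ v, B v a = B v b) ↔ a = b := by
  refine ⟨fun h => sub_eq_zero.mp (hB _ fun v => ?_), fun h _ => h ▸ rfl⟩
  rw [map_sub, h, sub_self]

variable {R M N : Type*} [CommRing R] [AddCommGroup M] [Module R M]
  [AddCommGroup N] [Module R N] {B B' : M →ₗ[R] M →ₗ[R] N} {x : Module.End R M}

theorem isSkewAdjoint_iff : B.IsSkewAdjoint x ↔ ∀ v w, B (x v) w = -B v (x w) := by
  simp only [IsSkewAdjoint, IsAdjointPair, Pi.neg_apply, map_neg]

namespace IsSkewAdjoint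

theorem flip (h : B.IsSkewAdjoint x) : B.flip.IsSkewAdjoint x := by
  rw [isSkewAdjoint_iff] at h ⊢
  intro v w
  simp only [flip_apply, h w v, neg_neg]

theorem add (h : B.IsSkewAdjoint x) (h' : B'.IsSkewAdjoint x) : (B + B').IsSkewAdjoint x := by
  rw [isSkewAdjoint_iff] at h h' ⊢
  intro v w
  simp only [add_apply, h, h', neg_add]

theorem sub (h : B.IsSkewAdjoint x) (h' : B'.IsSkewAdjoint x) : (B - B').IsSkewAdjoint x := by
  rw [isSkewAdjoint_iff] at h h' ⊢
  intro v w
  simp only [sub_apply, h, h', neg_sub_neg, neg_sub]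

theorem smul (c : R) (h : B.IsSkewAdjoint x) : (c • B).IsSkewAdjoint x := by
  rw [isSkewAdjoint_iff] at h ⊢
  intro v w
  simp only [smul_apply, h, smul_neg]

theorem compl₂_iff_commute (hB : B.SeparatingRight) (hx : B.IsSkewAdjoint x)
    (σ : Module.End R M) : (B.compl₂ σ).IsSkewAdjoint x ↔ Commute x σ := by
  rw [isSkewAdjoint_iff] at hx
  calc (B.compl₂ σ).IsSkewAdjoint x ↔ ∀ w v, B v (x (σ w)) = B v (σ (x w)) := by
        simp only [isSkewAdjoint_iff, compl₂_apply, hx, neg_inj]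
        exact forall_comm
    _ ↔ ∀ w, x (σ w) = σ (x w) := forall_congr' fun _ => hB.forall_apply_eq_iff
    _ ↔ Commute x σ := by rw [commute_iff_eq, LinearMap.ext_iff]; rfl

end IsSkewAdjoint

theorem isSkewAdjoint_iff_add_flip_and_sub_flip [Invertible (2 : R)] :
    B.IsSkewAdjoint x ↔ (B + B.flip).IsSkewAdjoint x ∧ (B - B.flip).IsSkewAdjoint x := by
  refine ⟨fun h => ⟨h.add h.flip, h.sub h.flip⟩, fun ⟨hplus, hminus⟩ => ?_⟩
  convert (hplus.add hminus).smul (⅟2 : R)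
  ext v w
  simp only [smul_apply, add_apply, sub_apply, flip_apply]
  rw [add_add_sub_cancel, ← two_smul R, smul_smul, invOf_mul_self, one_smul]

end LinearMap

theorem mem_skewAdjointLieSubalgebra {R M : Type*} [CommRing R] [AddCommGroup M] [Module R M]
    {B : LinearMap.BilinForm R M} {x : Module.End R M} :
    x ∈ skewAdjointLieSubalgebra B ↔ B.IsSkewAdjoint x :=
  LinearMap.mem_skewAdjointSubmodule x

open LinearMap in
theorem stmt17_general {F V : Type*} [Field F] [AddCommGroup V] [Module F V]
    (hchar : ringChar F ≠ 2)
    (f : LinearMap.BilinForm F V) (hfm : (f - f.flip).Nondegenerate)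
    (σmp : Module.End F V)
    (hσmp : ∀ v w : V, (f + f.flip) v w = (f - f.flip) v (σmp w)) :
    ∀ x : Module.End F V, x ∈ skewAdjointLieSubalgebra f ↔
      (x ∈ skewAdjointLieSubalgebra (f - f.flip) ∧ x * σmp = σmp * x) := by
  have : Invertible (2 : F) := invertibleOfNonzero (Ring.two_ne_zero hchar)
  -- `f.flip` is `BilinForm.flipHom f`; the lemmas above see it as `LinearMap.flip f`.
  have hplus : f + LinearMap.flip f = (f - f.flip).compl₂ σmp := ext₂ hσmp
  intro x
  rw [mem_skewAdjointLieSubalgebra, mem_skewAdjointLieSubalgebra,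
    isSkewAdjoint_iff_add_flip_and_sub_flip, hplus, and_comm]
  exact and_congr_right fun hx => hx.compl₂_iff_commute hfm.2 σmp

/-- In characteristic `≠ 2`, if the skew-symmetric part `f⁻` of a bilinear form `f` is
non-degenerate and `σ⁻⁺` is defined by `f⁺(v,w) = f⁻(v, σ⁻⁺ w)`, then `L(f)` is exactly
the centralizer of `σ⁻⁺` in `L(f⁻)`. -/
theorem stmt17 {F V : Type*} [Field F] [AddCommGroup V] [Module F V]
    [FiniteDimensional F V] (hchar : ringChar F ≠ 2)
    (f : LinearMap.BilinForm F V) (hfm : (f - f.flip).Nondegenerate)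
    (σmp : Module.End F V)
    (hσmp : ∀ v w : V, (f + f.flip) v w = (f - f.flip) v (σmp w)) :
    ∀ x : Module.End F V, x ∈ skewAdjointLieSubalgebra f ↔
      (x ∈ skewAdjointLieSubalgebra (f - f.flip) ∧ x * σmp = σmp * x) :=
  stmt17_general hchar f hfm σmp hσmp
end
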